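/- arXiv:2112.07730 — 4 statements merged into one kernel-verified Lean document; each statement's English description precedes it below -/
import Mathlib

section
/- Let $N \geq 1$ and let $\mathcal{A}$ be a square real matrix partitioned into $N \times N$ blocks $\mathcal{A}_{ij}$ ($1 \leq i,j \leq N$) which is block upper-triangular (i.e. $\mathcal{A}_{ij} = 0$ for $j < i$), with square diagonal blocks satisfying $\mathcal{A}_{ii} \geq \kappa_i \mathrm{Id}$ for constants $\kappa_i > 0$ (as quadratic forms). Then for any $\eta > 0$ there exist positive constants $\sigma_1, \ldots, \sigma_N > 0$ such that the block diagonal matrix $\mathcal{S} = \mathrm{diag}(\sigma_1 \mathrm{Id}, \ldots, \sigma_N \mathrm{Id})$ satisfies $\mathcal{S}\mathcal{A} \geq (\tilde\kappa - \mathfrak{b}\eta)\mathcal{S}$ as quadratic forms, where $\tilde\kappa = \min_i \kappa_i$ and $\mathfrak{b} = \max_{i < j} |\mathcal{A}_{ij}|_{\mathrm{op}}$. -/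
set_option maxHeartbeats 1000000 in
/-- Lemma A.1 (block upper-triangular matrix inequality): if `A` is block upper-triangular
with diagonal blocks bounded below by `κ i · Id` (as quadratic forms) and off-diagonal blocks
with operator norm at most `bc`, then for any `η > 0` there are positive weights `σ i` such that
the block-diagonal matrix `S = diag(σ i · Id)` satisfies `S A ≥ (min κ - bc η) S`
as quadratic forms. -/
theorem stmt_0 (N : ℕ) (hN : 1 ≤ N) (d : Fin N → ℕ)
    (A : Matrix ((i : Fin N) × Fin (d i)) ((i : Fin N) × Fin (d i)) ℝ)
    (hupper : ∀ (i j : Fin N) (a : Fin (d i)) (b : Fin (d j)), j < i → A ⟨i, a⟩ ⟨j, b⟩ = 0)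
    (κ : Fin N → ℝ) (hκ : ∀ i, 0 < κ i)
    (hdiag : ∀ (i : Fin N) (ξ : Fin (d i) → ℝ),
      κ i * ∑ a, (ξ a) ^ 2 ≤ ∑ a, ∑ b, ξ a * A ⟨i, a⟩ ⟨i, b⟩ * ξ b)
    (bc : ℝ) (hbc0 : 0 ≤ bc)
    (hbc : ∀ (i j : Fin N), i < j → ∀ (ξ : Fin (d j) → ℝ),
      ∑ a, (∑ b, A ⟨i, a⟩ ⟨j, b⟩ * ξ b) ^ 2 ≤ bc ^ 2 * ∑ b, (ξ b) ^ 2)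
    (η : ℝ) (hη : 0 < η) :
    ∃ σ : Fin N → ℝ, (∀ i, 0 < σ i) ∧
      ∀ ξ : ((i : Fin N) × Fin (d i)) → ℝ,
        (Finset.univ.inf' ⟨⟨0, hN⟩, Finset.mem_univ _⟩ κ - bc * η) *
            ∑ p, σ p.1 * (ξ p) ^ 2 ≤
          ∑ p, ∑ q, σ p.1 * ξ p * A p q * ξ q := by
  classical
  have hNpos : (0:ℝ) < N := by
    have : (0:ℕ) < N := hN
    exact_mod_cast this
  set κt : ℝ := Finset.univ.inf' ⟨⟨0, hN⟩, Finset.mem_univ _⟩ κ with hκt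
  set s : ℝ := η / N with hs
  have hspos : 0 < s := div_pos hη hNpos
  set M : ℝ := (N:ℝ)^2 / η^2 + 1 with hMdef
  have hM1 : (1:ℝ) ≤ M := le_add_of_nonneg_left (by positivity)
  have hMpos : (0:ℝ) < M := lt_of_lt_of_le one_pos hM1
  have hMge : (N:ℝ)^2/η^2 ≤ M := le_add_of_nonneg_right zero_le_one
  refine ⟨fun i => M ^ (i:ℕ), fun i => pow_pos hMpos _, ?_⟩
  intro ξ
  set σ : Fin N → ℝ := fun i => M ^ (i:ℕ) with hσ
  have hσpos : ∀ i, 0 < σ i := fun i => pow_pos hMpos _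
  -- block norms squared
  set X : Fin N → ℝ := fun i => ∑ a, (ξ ⟨i,a⟩)^2 with hX
  have hXval : ∀ i, X i = ∑ a, (ξ ⟨i,a⟩)^2 := fun i => rfl
  have hXnn : ∀ i, 0 ≤ X i := fun i => Finset.sum_nonneg fun a _ => sq_nonneg _
  have hσle : ∀ i j : Fin N, i < j → σ i ≤ σ j / M := by
    intro i j hij
    rw [le_div_iff₀ hMpos]
    have : M ^ ((i:ℕ)+1) ≤ M ^ (j:ℕ) := pow_le_pow_right₀ hM1 (by omega)
    calc σ i * M = M ^ ((i:ℕ)+1) := by rw [pow_succ]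
    _ ≤ M ^ (j:ℕ) := this
    _ = σ j := rfl
  -- rewrite the sums as block sums
  have hsig : ∀ f : ((i : Fin N) × Fin (d i)) → ℝ, ∑ p, f p = ∑ i, ∑ a, f ⟨i,a⟩ := by
    intro f
    rw [← Finset.univ_sigma_univ, Finset.sum_sigma]
  have hsum1 : ∑ p : (i : Fin N) × Fin (d i), σ p.1 * (ξ p)^2 = ∑ i, σ i * X i := by
    rw [hsig]
    exact Finset.sum_congr rfl fun i _ => by rw [Finset.mul_sum]
  have hsum2 : ∑ p : (i : Fin N) × Fin (d i), ∑ q, σ p.1 * ξ p * A p q * ξ q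
      = ∑ i, ∑ j, ∑ a, ∑ b, σ i * ξ ⟨i,a⟩ * A ⟨i,a⟩ ⟨j,b⟩ * ξ ⟨j,b⟩ := by
    rw [hsig]
    refine Finset.sum_congr rfl fun i _ => ?_
    calc ∑ a, ∑ q, σ i * ξ ⟨i,a⟩ * A ⟨i,a⟩ q * ξ q
        = ∑ a, ∑ j, ∑ b, σ i * ξ ⟨i,a⟩ * A ⟨i,a⟩ ⟨j,b⟩ * ξ ⟨j,b⟩ :=
          Finset.sum_congr rfl fun a _ => hsig _
      _ = ∑ j, ∑ a, ∑ b, σ i * ξ ⟨i,a⟩ * A ⟨i,a⟩ ⟨j,b⟩ * ξ ⟨j,b⟩ := Finset.sum_comm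
  rw [hsum1, hsum2]
  clear_value σ X M s
  have hNne : (N:ℝ) ≠ 0 := ne_of_gt hNpos
  have hηne : η ≠ 0 := ne_of_gt hη
  have hsne : s ≠ 0 := ne_of_gt hspos
  have hMne : M ≠ 0 := ne_of_gt hMpos
  -- lower bound function
  set L : Fin N → Fin N → ℝ := fun i j =>
    (if i = j then σ i * κ i * X i else 0)
      - (if i < j then bc * (s/2 * (σ i * X i)) + bc * (σ i / (2*s) * X j) else 0) with hL
  have key : ∀ i j, L i j ≤ ∑ a, ∑ b, σ i * ξ ⟨i,a⟩ * A ⟨i,a⟩ ⟨j,b⟩ * ξ ⟨j,b⟩ := by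
    intro i j
    rcases lt_trichotomy i j with hij | hij | hij
    · -- strictly upper block
      have hT2 : (∑ a, ξ ⟨i,a⟩ * (∑ b, A ⟨i,a⟩ ⟨j,b⟩ * ξ ⟨j,b⟩))^2
          ≤ X i * (bc^2 * X j) := by
        rw [hXval i, hXval j]
        calc (∑ a, ξ ⟨i,a⟩ * (∑ b, A ⟨i,a⟩ ⟨j,b⟩ * ξ ⟨j,b⟩))^2
            ≤ (∑ a, (ξ ⟨i,a⟩)^2) * ∑ a, (∑ b, A ⟨i,a⟩ ⟨j,b⟩ * ξ ⟨j,b⟩)^2 :=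
              Finset.sum_mul_sq_le_sq_mul_sq _ _ _
          _ ≤ (∑ a, (ξ ⟨i,a⟩)^2) * (bc^2 * ∑ b, (ξ ⟨j,b⟩)^2) := by
              refine mul_le_mul_of_nonneg_left (hbc i j hij _) ?_
              exact Finset.sum_nonneg fun a _ => sq_nonneg _
      set c : ℝ := ∑ a, ξ ⟨i,a⟩ * (∑ b, A ⟨i,a⟩ ⟨j,b⟩ * ξ ⟨j,b⟩) with hc
      have hR : 0 ≤ bc * (s/2 * X i) + bc * (X j / (2*s)) :=
        add_nonneg (mul_nonneg hbc0 (mul_nonneg (div_nonneg hspos.le (by norm_num)) (hXnn i)))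
          (mul_nonneg hbc0 (div_nonneg (hXnn j) (by linarith)))
      have hab : bc^2 * ((s/2 * X i) * (X j/(2*s))) = bc^2 * (X i * X j) / 4 := by
        field_simp
        ring
      have hcsq : c^2 ≤ (bc * (s/2 * X i) + bc * (X j / (2*s)))^2 := by
        nlinarith [hT2, hab, mul_nonneg (sq_nonneg bc) (sq_nonneg (s/2 * X i - X j/(2*s)))]
      have hcge : -(bc * (s/2 * X i) + bc * (X j / (2*s))) ≤ c := by
        nlinarith [hcsq, hR]
      have hfac : ∑ a, ∑ b, σ i * ξ ⟨i,a⟩ * A ⟨i,a⟩ ⟨j,b⟩ * ξ ⟨j,b⟩ = σ i * c := by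
        rw [hc, Finset.mul_sum]
        refine Finset.sum_congr rfl fun a _ => ?_
        rw [Finset.mul_sum, Finset.mul_sum]
        exact Finset.sum_congr rfl fun b _ => by ring
      rw [hfac, hL]
      simp only [if_neg (ne_of_lt hij), if_pos hij, zero_sub]
      have := mul_le_mul_of_nonneg_left hcge (hσpos i).le
      calc -(bc * (s/2 * (σ i * X i)) + bc * (σ i/(2*s) * X j))
          = σ i * (-(bc * (s/2 * X i) + bc * (X j / (2*s)))) := by ring
        _ ≤ σ i * c := this
    · -- diagonal block
      subst hij
      have hdi : κ i * X i ≤ ∑ a, ∑ b, ξ ⟨i,a⟩ * A ⟨i,a⟩ ⟨i,b⟩ * ξ ⟨i,b⟩ := by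
        rw [hXval i]
        exact hdiag i (fun a => ξ ⟨i,a⟩)
      have hfac : ∑ a, ∑ b, σ i * ξ ⟨i,a⟩ * A ⟨i,a⟩ ⟨i,b⟩ * ξ ⟨i,b⟩
          = σ i * ∑ a, ∑ b, ξ ⟨i,a⟩ * A ⟨i,a⟩ ⟨i,b⟩ * ξ ⟨i,b⟩ := by
        rw [Finset.mul_sum]
        refine Finset.sum_congr rfl fun a _ => ?_
        rw [Finset.mul_sum]
        exact Finset.sum_congr rfl fun b _ => by ring
      rw [hfac, hL]
      simp only [if_pos rfl, if_neg (lt_irrefl i), sub_zero]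
      calc σ i * κ i * X i = σ i * (κ i * X i) := by ring
        _ ≤ σ i * ∑ a, ∑ b, ξ ⟨i,a⟩ * A ⟨i,a⟩ ⟨i,b⟩ * ξ ⟨i,b⟩ :=
          mul_le_mul_of_nonneg_left hdi (hσpos i).le
    · -- lower block : zero
      have hz : ∑ a, ∑ b, σ i * ξ ⟨i,a⟩ * A ⟨i,a⟩ ⟨j,b⟩ * ξ ⟨j,b⟩ = 0 := by
        refine Finset.sum_eq_zero fun a _ => Finset.sum_eq_zero fun b _ => ?_
        rw [hupper i j a b hij]; ring
      rw [hz, hL]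
      simp only [if_neg (ne_of_gt hij), if_neg (not_lt_of_gt hij), sub_zero, le_refl]
  have hLsum : ∑ i, ∑ j, L i j ≤ ∑ i, ∑ j, ∑ a, ∑ b, σ i * ξ ⟨i,a⟩ * A ⟨i,a⟩ ⟨j,b⟩ * ξ ⟨j,b⟩ :=
    Finset.sum_le_sum fun i _ => Finset.sum_le_sum fun j _ => key i j
  refine le_trans ?_ hLsum
  -- compute / bound the sum of L
  have hD : ∑ i, ∑ j, (if i = j then σ i * κ i * X i else 0) = ∑ i, σ i * κ i * X i := by
    refine Finset.sum_congr rfl fun i _ => ?_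
    simp
  have hDge : κt * ∑ i, σ i * X i ≤ ∑ i, σ i * κ i * X i := by
    rw [Finset.mul_sum]
    refine Finset.sum_le_sum fun i _ => ?_
    have hk : κt ≤ κ i := Finset.inf'_le κ (Finset.mem_univ i)
    have := mul_le_mul_of_nonneg_right hk (mul_nonneg (hσpos i).le (hXnn i))
    calc κt * (σ i * X i) ≤ κ i * (σ i * X i) := this
      _ = σ i * κ i * X i := by ring
  have hO : ∑ i, ∑ j, (if i < j then bc * (s/2 * (σ i * X i)) + bc * (σ i / (2*s) * X j) else 0)
      ≤ bc * η * ∑ i, σ i * X i := by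
    have split : ∀ i j : Fin N, (if i < j then bc * (s/2 * (σ i * X i)) + bc * (σ i / (2*s) * X j) else 0)
        = (if i < j then bc * (s/2 * (σ i * X i)) else 0) + (if i < j then bc * (σ i / (2*s) * X j) else 0) := by
      intro i j; split <;> simp
    have hO1 : ∑ i, ∑ j, (if i < j then bc * (s/2 * (σ i * X i)) else 0)
        ≤ (bc * η / 2) * ∑ i, σ i * X i := by
      have step : ∀ i : Fin N, ∑ j, (if i < j then bc * (s/2 * (σ i * X i)) else 0)
          ≤ (N:ℝ) * (bc * (s/2 * (σ i * X i))) := by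
        intro i
        have hb : ∀ j : Fin N, (if i < j then bc * (s/2 * (σ i * X i)) else 0)
            ≤ bc * (s/2 * (σ i * X i)) := by
          intro j; split
          · exact le_rfl
          · exact mul_nonneg hbc0 (mul_nonneg (div_nonneg hspos.le (by norm_num))
              (mul_nonneg (hσpos i).le (hXnn i)))
        calc ∑ j, (if i < j then bc * (s/2 * (σ i * X i)) else 0)
            ≤ ∑ _j : Fin N, bc * (s/2 * (σ i * X i)) := Finset.sum_le_sum fun j _ => hb j
          _ = (N:ℝ) * (bc * (s/2 * (σ i * X i))) := by
              rw [Finset.sum_const, Finset.card_univ, Fintype.card_fin, nsmul_eq_mul]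
      calc ∑ i, ∑ j, (if i < j then bc * (s/2 * (σ i * X i)) else 0)
          ≤ ∑ i, (N:ℝ) * (bc * (s/2 * (σ i * X i))) := Finset.sum_le_sum fun i _ => step i
        _ = (bc * η / 2) * ∑ i, σ i * X i := by
            have hsN : (N:ℝ) * s = η := by
              rw [hs]
              field_simp [hNne]
            rw [Finset.mul_sum]
            refine Finset.sum_congr rfl fun i _ => ?_
            linear_combination (bc * (σ i * X i) / 2) * hsN
    have hO2 : ∑ i, ∑ j, (if i < j then bc * (σ i / (2*s) * X j) else 0)
        ≤ (bc * η / 2) * ∑ i, σ i * X i := by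
      rw [Finset.sum_comm]
      have step : ∀ j : Fin N, ∑ i, (if i < j then bc * (σ i / (2*s) * X j) else 0)
          ≤ (N:ℝ) * (bc * (σ j / M / (2*s) * X j)) := by
        intro j
        have hb : ∀ i : Fin N, (if i < j then bc * (σ i / (2*s) * X j) else 0)
            ≤ bc * (σ j / M / (2*s) * X j) := by
          intro i; split
          · next hij =>
              have h1 : σ i ≤ σ j / M := hσle i j hij
              have h2 : σ i / (2*s) * X j ≤ σ j / M / (2*s) * X j := by
                apply mul_le_mul_of_nonneg_right _ (hXnn j)
                have h2s : (0:ℝ) < 2*s := by positivity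
                exact div_le_div_of_nonneg_right h1 h2s.le
              exact mul_le_mul_of_nonneg_left h2 hbc0
          · exact mul_nonneg hbc0 (mul_nonneg
              (div_nonneg (div_nonneg (hσpos j).le hMpos.le) (by linarith)) (hXnn j))
        calc ∑ i, (if i < j then bc * (σ i / (2*s) * X j) else 0)
            ≤ ∑ _i : Fin N, bc * (σ j / M / (2*s) * X j) := Finset.sum_le_sum fun i _ => hb i
          _ = (N:ℝ) * (bc * (σ j / M / (2*s) * X j)) := by
              rw [Finset.sum_const, Finset.card_univ, Fintype.card_fin, nsmul_eq_mul]
      have hcoef : (N:ℝ) / (M * (2*s)) ≤ η / 2 := by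
        rw [div_le_div_iff₀ (mul_pos hMpos (by linarith)) (by norm_num)]
        have h1 : (N:ℝ)^2/η^2 * (2*s) ≤ M * (2*s) :=
          mul_le_mul_of_nonneg_right hMge (by positivity)
        have h2 : (N:ℝ)^2/η^2 * (2*s) = 2*N/η := by
          rw [hs]
          field_simp [hNne, hηne]
        have h4 : η * (2*(N:ℝ)/η) ≤ η * (M*(2*s)) :=
          mul_le_mul_of_nonneg_left (h2 ▸ h1) hη.le
        have h3 : η * (2*(N:ℝ)/η) = 2*N := by field_simp [hηne]
        linarith [h4, h3.symm.le]
      calc ∑ j, ∑ i, (if i < j then bc * (σ i / (2*s) * X j) else 0)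
          ≤ ∑ j, (N:ℝ) * (bc * (σ j / M / (2*s) * X j)) := Finset.sum_le_sum fun j _ => step j
        _ ≤ (bc * η / 2) * ∑ j, σ j * X j := by
            rw [Finset.mul_sum]
            refine Finset.sum_le_sum fun j _ => ?_
            have hnn : 0 ≤ bc * (σ j * X j) :=
              mul_nonneg hbc0 (mul_nonneg (hσpos j).le (hXnn j))
            have expand : (N:ℝ) * (bc * (σ j / M / (2*s) * X j))
                = ((N:ℝ)/(M*(2*s))) * (bc * (σ j * X j)) := by
              field_simp
            have expand2 : (bc * η / 2) * (σ j * X j) = (η/2) * (bc * (σ j * X j)) := by ring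
            rw [expand, expand2]
            exact mul_le_mul_of_nonneg_right hcoef hnn
    calc ∑ i, ∑ j, (if i < j then bc * (s/2 * (σ i * X i)) + bc * (σ i / (2*s) * X j) else 0)
        = ∑ i, ∑ j, ((if i < j then bc * (s/2 * (σ i * X i)) else 0)
            + (if i < j then bc * (σ i / (2*s) * X j) else 0)) := by
          exact Finset.sum_congr rfl fun i _ => Finset.sum_congr rfl fun j _ => split i j
      _ = (∑ i, ∑ j, (if i < j then bc * (s/2 * (σ i * X i)) else 0))
            + ∑ i, ∑ j, (if i < j then bc * (σ i / (2*s) * X j) else 0) := by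
          rw [← Finset.sum_add_distrib]
          exact Finset.sum_congr rfl fun i _ => Finset.sum_add_distrib
      _ ≤ bc * η * ∑ i, σ i * X i := by linarith
  have hLsum2 : ∑ i, ∑ j, L i j
      = (∑ i, ∑ j, (if i = j then σ i * κ i * X i else 0))
        - ∑ i, ∑ j, (if i < j then bc * (s/2 * (σ i * X i)) + bc * (σ i / (2*s) * X j) else 0) := by
    rw [← Finset.sum_sub_distrib]
    exact Finset.sum_congr rfl fun i _ => Finset.sum_sub_distrib (fun j => if i = j then σ i * κ i * X i else 0)
      (fun j => if i < j then bc * (s/2 * (σ i * X i)) + bc * (σ i / (2*s) * X j) else 0)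
  rw [hLsum2, hD]
  have hexp : (κt - bc * η) * ∑ i, σ i * X i
      = κt * (∑ i, σ i * X i) - bc * η * ∑ i, σ i * X i := by ring
  have hO' : bc * η * ∑ i, σ i * X i
      = bc * η * ∑ i, σ i * X i := rfl
  rw [hexp]
  linarith [hDge, hO]
end

section
/- Let $n \geq 3$, $\epsilon_1 > 0$, and for a tensor $\acute{g} = (\acute{g}_{Qjlm})$ with indices $Q \in \{1,\ldots,n-1\}$, $j,l,m \in \{0,\ldots,n-1\}$, satisfying the symmetry $\acute{g}_{Qjlm} = \acute{g}_{Qjml}$, define $\mathcal{N}_{\acute{g}} = \acute{g}_{Pqrs}\, \delta^{PQ}\delta^{rl}\delta^{sm}\bigl((1+\epsilon_1)\delta^{qj}\acute{g}_{Qjlm} + \delta_0^q \delta_0^j(\acute{g}_{Qljm} + \acute{g}_{Qmjl} - \acute{g}_{Qjlm})\bigr)$ (summation over repeated indices). Then $\mathcal{N}_{\acute{g}} \geq \bigl(\epsilon_1 - \tfrac{1}{1+\sqrt{3}}\bigr)|\acute{g}|^2$, where $|\acute{g}|^2 = \delta^{PQ}\delta^{qj}\delta^{rl}\delta^{sm}\acute{g}_{Pqrs}\acute{g}_{Qjlm}$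 is the Euclidean norm squared. -/
open Finset

private lemma cross_bd (c lam x y : ℝ) (hc : 0 ≤ c) (hcl : c * lam = 1) :
    -(1/2) * (c * x ^ 2 + lam * y ^ 2) ≤ x * y := by
  have e : c * (x + lam * y) ^ 2
      = c * x ^ 2 + 2 * (c * lam) * (x * y) + (c * lam) * (lam * y ^ 2) := by ring
  rw [hcl] at e
  have h0 := mul_nonneg hc (sq_nonneg (x + lam * y))
  linarith [e.le, e.symm.le]

private lemma aux_key (n' : ℕ) (c lam : ℝ) (hc : 0 < c) (hcl : c * lam = 1)
    (h2c : 2 + 2 * c = lam)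
    (h : Fin (n' + 3) → Fin (n' + 3) → Fin (n' + 3) → ℝ)
    (hsym : ∀ j l m, h j l m = h j m l) :
    0 ≤ ∑ l, ∑ m, ((1 + c) * (∑ q, h q l m ^ 2) +
        h 0 l m * (h l 0 m + h m 0 l - h 0 l m)) := by
  classical
  set s : Finset (Fin (n' + 3)) := Finset.univ.erase 0 with hs
  have hsplit : ∀ f : Fin (n' + 3) → ℝ, ∑ x, f x = f 0 + ∑ x ∈ s, f x :=
    fun f => (Finset.add_sum_erase Finset.univ f (Finset.mem_univ 0)).symm
  set Ssum : ℝ := ∑ l, ∑ m, ∑ q, h q l m ^ 2 with hSsum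
  set X1 : ℝ := ∑ l, ∑ m, h 0 l m * h l 0 m with hX1
  set U : ℝ := ∑ l, ∑ m, h 0 l m ^ 2 with hU
  set t0 : ℝ := h 0 0 0 ^ 2 with ht0
  set A1 : ℝ := ∑ l ∈ s, h 0 0 l ^ 2 with hA1
  set B1 : ℝ := ∑ l ∈ s, h l 0 0 ^ 2 with hB1
  set A2 : ℝ := ∑ l ∈ s, ∑ m ∈ s, h 0 l m ^ 2 with hA2
  set B2 : ℝ := ∑ l ∈ s, ∑ m ∈ s, h l 0 m ^ 2 with hB2
  -- step 1: the second cross term equals the first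
  have hswap : (∑ l, ∑ m, h 0 l m * h m 0 l) = X1 := by
    rw [Finset.sum_comm, hX1]
    exact Finset.sum_congr rfl fun a _ => Finset.sum_congr rfl fun b _ => by
      rw [hsym 0 b a]
  -- step 2: rewrite the target sum
  have h2 : (∑ l, ∑ m, ((1 + c) * (∑ q, h q l m ^ 2) +
        h 0 l m * (h l 0 m + h m 0 l - h 0 l m)))
      = (1 + c) * Ssum + 2 * X1 - U := by
    have e : ∀ l m : Fin (n' + 3),
        (1 + c) * (∑ q, h q l m ^ 2) + h 0 l m * (h l 0 m + h m 0 l - h 0 l m)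
        = (∑ q, (1 + c) * h q l m ^ 2) +
          (h 0 l m * h l 0 m + h 0 l m * h m 0 l - h 0 l m ^ 2) := by
      intro l m
      rw [Finset.mul_sum]
      ring
    have e2 : (∑ l, ∑ m, ((1 + c) * (∑ q, h q l m ^ 2) +
          h 0 l m * (h l 0 m + h m 0 l - h 0 l m)))
        = ∑ l, ∑ m, ((∑ q, (1 + c) * h q l m ^ 2) +
          (h 0 l m * h l 0 m + h 0 l m * h m 0 l - h 0 l m ^ 2)) :=
      Finset.sum_congr rfl fun l _ => Finset.sum_congr rfl fun m _ => e l m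
    rw [e2]
    simp only [Finset.sum_add_distrib, Finset.sum_sub_distrib, ← Finset.mul_sum]
    rw [hswap]
    rw [← hSsum, ← hX1, ← hU]
    ring
  rw [h2]
  -- step 3: decompose U
  have hU' : U = t0 + 2 * A1 + A2 := by
    rw [hU, hsplit (fun l => ∑ m, h 0 l m ^ 2)]
    rw [hsplit (fun m => h 0 0 m ^ 2)]
    have e : ∀ l ∈ s, (∑ m, h 0 l m ^ 2) = h 0 0 l ^ 2 + ∑ m ∈ s, h 0 l m ^ 2 := by
      intro l _
      rw [hsplit (fun m => h 0 l m ^ 2), hsym 0 l 0]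
    rw [Finset.sum_congr rfl e, Finset.sum_add_distrib]
    rw [ht0, hA1, hA2]
    ring
  -- step 4: lower bound for Ssum
  have hS' : t0 + 2 * A1 + A2 + B1 + 2 * B2 ≤ Ssum := by
    have hcomm : Ssum = ∑ q, ∑ l, ∑ m, h q l m ^ 2 := by
      rw [hSsum]
      rw [show (∑ l, ∑ m, ∑ q, h q l m ^ 2 : ℝ) = ∑ l, ∑ q, ∑ m, h q l m ^ 2 from
        Finset.sum_congr rfl fun l _ => Finset.sum_comm]
      exact Finset.sum_comm
    rw [hcomm, hsplit (fun q => ∑ l, ∑ m, h q l m ^ 2)]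
    have hfirst : (∑ l, ∑ m, h 0 l m ^ 2) = t0 + 2 * A1 + A2 := by
      rw [← hU]; exact hU'
    rw [hfirst]
    have hq : ∀ q ∈ s, h q 0 0 ^ 2 + (∑ m ∈ s, h q 0 m ^ 2) + (∑ l ∈ s, h q 0 l ^ 2)
        ≤ ∑ l, ∑ m, h q l m ^ 2 := by
      intro q _
      rw [hsplit (fun l => ∑ m, h q l m ^ 2), hsplit (fun m => h q 0 m ^ 2)]
      have hinner : (∑ l ∈ s, h q 0 l ^ 2) ≤ ∑ l ∈ s, ∑ m, h q l m ^ 2 := by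
        apply Finset.sum_le_sum
        intro l _
        have h1 : h q l 0 ^ 2 ≤ ∑ m, h q l m ^ 2 :=
          Finset.single_le_sum (f := fun m => h q l m ^ 2)
            (fun i _ => sq_nonneg _) (Finset.mem_univ 0)
        rw [hsym q l 0] at h1
        exact h1
      linarith
    have hsum := Finset.sum_le_sum hq
    have hsplit2 : (∑ q ∈ s, (h q 0 0 ^ 2 + (∑ m ∈ s, h q 0 m ^ 2) + (∑ l ∈ s, h q 0 l ^ 2)))
        = B1 + 2 * B2 := by
      rw [hB1, hB2]
      simp only [Finset.sum_add_distrib]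
      ring
    rw [hsplit2] at hsum
    linarith
  -- step 5: lower bound for X1
  have hX1' : (t0 + A1) - (1/2) * (A1 + B1) - (1/2) * (c * A2 + lam * B2) ≤ X1 := by
    rw [hX1, hsplit (fun l => ∑ m, h 0 l m * h l 0 m)]
    have hfirst : (∑ m, h 0 0 m * h 0 0 m) = t0 + A1 := by
      rw [hsplit (fun m => h 0 0 m * h 0 0 m)]
      rw [ht0, hA1]
      have e : ∀ m ∈ s, h 0 0 m * h 0 0 m = h 0 0 m ^ 2 := fun m _ => (sq _).symm
      rw [Finset.sum_congr rfl e]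
      ring
    rw [hfirst]
    have hl : ∀ l ∈ s,
        (-(1/2) * (h 0 0 l ^ 2 + h l 0 0 ^ 2)
          + ∑ m ∈ s, -(1/2) * (c * h 0 l m ^ 2 + lam * h l 0 m ^ 2))
        ≤ ∑ m, h 0 l m * h l 0 m := by
      intro l _
      rw [hsplit (fun m => h 0 l m * h l 0 m)]
      have hb1 : -(1/2) * (h 0 0 l ^ 2 + h l 0 0 ^ 2) ≤ h 0 l 0 * h l 0 0 := by
        rw [hsym 0 l 0]
        have hb := cross_bd 1 1 (h 0 0 l) (h l 0 0) zero_le_one (one_mul 1)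
        linarith
      have hb2 : ∀ m ∈ s, -(1/2) * (c * h 0 l m ^ 2 + lam * h l 0 m ^ 2)
          ≤ h 0 l m * h l 0 m := fun m _ => cross_bd c lam _ _ hc.le hcl
      have hb2s := Finset.sum_le_sum hb2
      linarith
    have hsum := Finset.sum_le_sum hl
    have hsplit2 : (∑ l ∈ s, (-(1/2) * (h 0 0 l ^ 2 + h l 0 0 ^ 2)
          + ∑ m ∈ s, -(1/2) * (c * h 0 l m ^ 2 + lam * h l 0 m ^ 2)))
        = -(1/2) * (A1 + B1) - (1/2) * (c * A2 + lam * B2) := by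
      rw [hA1, hB1, hA2, hB2]
      rw [Finset.sum_add_distrib]
      have e : ∀ l ∈ s, (∑ m ∈ s, -(1/2) * (c * h 0 l m ^ 2 + lam * h l 0 m ^ 2))
          = -(1/2) * (c * (∑ m ∈ s, h 0 l m ^ 2) + lam * (∑ m ∈ s, h l 0 m ^ 2)) := by
        intro l _
        rw [← Finset.mul_sum, Finset.sum_add_distrib, ← Finset.mul_sum, ← Finset.mul_sum]
      rw [Finset.sum_congr rfl e]
      have e2 : (∑ l ∈ s, -(1/2) * (c * (∑ m ∈ s, h 0 l m ^ 2) + lam * (∑ m ∈ s, h l 0 m ^ 2)))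
          = -(1/2) * (c * (∑ l ∈ s, ∑ m ∈ s, h 0 l m ^ 2)
            + lam * (∑ l ∈ s, ∑ m ∈ s, h l 0 m ^ 2)) := by
        rw [← Finset.mul_sum, Finset.sum_add_distrib, ← Finset.mul_sum, ← Finset.mul_sum]
      rw [e2]
      have e3 : (∑ l ∈ s, (-(1/2) * (h 0 0 l ^ 2 + h l 0 0 ^ 2)))
          = -(1/2) * ((∑ l ∈ s, h 0 0 l ^ 2) + (∑ l ∈ s, h l 0 0 ^ 2)) := by
        rw [← Finset.mul_sum, Finset.sum_add_distrib]
      rw [e3]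
      ring
    rw [hsplit2] at hsum
    linarith
  -- nonnegativity and conclusion
  have ht0n : 0 ≤ t0 := sq_nonneg _
  have hA1n : 0 ≤ A1 := Finset.sum_nonneg fun i _ => sq_nonneg _
  have hB1n : 0 ≤ B1 := Finset.sum_nonneg fun i _ => sq_nonneg _
  have hA2n : 0 ≤ A2 := Finset.sum_nonneg fun i _ => Finset.sum_nonneg fun j _ => sq_nonneg _
  have hB2n : 0 ≤ B2 := Finset.sum_nonneg fun i _ => Finset.sum_nonneg fun j _ => sq_nonneg _
  have hmul := mul_le_mul_of_nonneg_left hS' (by linarith : (0:ℝ) ≤ 1 + c)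
  nlinarith [hX1', hU', ht0n, hA1n, hB1n, hA2n, hB2n, hc, hcl, h2c, hmul]

private lemma aux_full (n' : ℕ) (ε₁ : ℝ)
    (h : Fin (n' + 3) → Fin (n' + 3) → Fin (n' + 3) → ℝ)
    (hsym : ∀ j l m, h j l m = h j m l) :
    (ε₁ - 1 / (1 + Real.sqrt 3)) * (∑ q, ∑ l, ∑ m, h q l m ^ 2) ≤
      ∑ l, ∑ m, ((1 + ε₁) * (∑ q, h q l m ^ 2) +
        h 0 l m * (h l 0 m + h m 0 l - h 0 l m)) := by
  have hs3 : Real.sqrt 3 * Real.sqrt 3 = 3 := Real.mul_self_sqrt (by norm_num)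
  have hs1 : (1:ℝ) ≤ Real.sqrt 3 := by nlinarith [Real.sqrt_nonneg 3]
  have hlam : (0:ℝ) < 1 + Real.sqrt 3 := by linarith
  set c : ℝ := 1 / (1 + Real.sqrt 3) with hcdef
  have hc : 0 < c := by positivity
  have hcl : c * (1 + Real.sqrt 3) = 1 := by
    rw [hcdef]; field_simp
  have h2c : 2 + 2 * c = 1 + Real.sqrt 3 := by
    rw [hcdef]
    field_simp
    nlinarith
  have key := aux_key n' c (1 + Real.sqrt 3) hc hcl h2c h hsym
  have hcomm : (∑ q, ∑ l, ∑ m, h q l m ^ 2) = ∑ l, ∑ m, ∑ q, h q l m ^ 2 := by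
    rw [show (∑ q, ∑ l, ∑ m, h q l m ^ 2 : ℝ) = ∑ q, ∑ m, ∑ l, h q l m ^ 2 from
      Finset.sum_congr rfl fun q _ => Finset.sum_comm]
    rw [show (∑ q, ∑ m, ∑ l, h q l m ^ 2 : ℝ) = ∑ m, ∑ q, ∑ l, h q l m ^ 2 from
      Finset.sum_comm]
    rw [show (∑ m, ∑ q, ∑ l, h q l m ^ 2 : ℝ) = ∑ m, ∑ l, ∑ q, h q l m ^ 2 from
      Finset.sum_congr rfl fun m _ => Finset.sum_comm]
    exact Finset.sum_comm
  have hid : (∑ l, ∑ m, ((1 + ε₁) * (∑ q, h q l m ^ 2)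
        + h 0 l m * (h l 0 m + h m 0 l - h 0 l m)))
      = (ε₁ - c) * (∑ l, ∑ m, ∑ q, h q l m ^ 2)
        + ∑ l, ∑ m, ((1 + c) * (∑ q, h q l m ^ 2)
          + h 0 l m * (h l 0 m + h m 0 l - h 0 l m)) := by
    rw [Finset.mul_sum, ← Finset.sum_add_distrib]
    refine Finset.sum_congr rfl fun l _ => ?_
    rw [Finset.mul_sum, ← Finset.sum_add_distrib]
    exact Finset.sum_congr rfl fun m _ => by ring
  rw [hcomm, hid]
  linarith [key]




/-- Lemma 10.1: coercivity of the quadratic form `𝒩_ǵ`. The spacetime dimension is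
`n = n' + 3 ≥ 3`; spatial indices range over `Fin (n' + 2)` ("1,…,n-1") and spacetime
indices over `Fin (n' + 3)` ("0,…,n-1"). For a tensor `g = (ǵ_{Qjlm})` symmetric in its
last two indices,
`𝒩_ǵ = ∑_{Q,l,m} ((1+ε₁) ∑_q ǵ_{Qqlm}² + ǵ_{Q0lm}(ǵ_{Ql0m} + ǵ_{Qm0l} - ǵ_{Q0lm}))`
is bounded below by `(ε₁ - 1/(1+√3)) |ǵ|²`. -/
theorem stmt_2 (n' : ℕ) (ε₁ : ℝ) (hε₁ : 0 < ε₁)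
    (g : Fin (n' + 2) → Fin (n' + 3) → Fin (n' + 3) → Fin (n' + 3) → ℝ)
    (hsym : ∀ Q j l m, g Q j l m = g Q j m l) :
    (ε₁ - 1 / (1 + Real.sqrt 3)) *
        ∑ Q : Fin (n' + 2), ∑ q : Fin (n' + 3), ∑ l : Fin (n' + 3), ∑ m : Fin (n' + 3),
          (g Q q l m) ^ 2 ≤
      ∑ Q : Fin (n' + 2), ∑ l : Fin (n' + 3), ∑ m : Fin (n' + 3),
        ((1 + ε₁) * (∑ q : Fin (n' + 3), (g Q q l m) ^ 2) +
          g Q 0 l m * (g Q l 0 m + g Q m 0 l - g Q 0 l m)) := by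
  rw [Finset.mul_sum]
  exact Finset.sum_le_sum fun Q _ => aux_full n' ε₁ (g Q) (hsym Q)
end

section
/- Let $n \geq 3$ and let $r_1, \ldots, r_{n-1}$ be real numbers with $\sum_{\Lambda=1}^{n-1} r_\Lambda \geq 0$ satisfying the generalized Kasner relation $\bigl(\sum_{\Lambda=1}^{n-1} r_\Lambda\bigr)^2 - \sum_{\Lambda=1}^{n-1} r_\Lambda^2 + 4\sum_{\Lambda=1}^{n-1} r_\Lambda = 0$. Define $P = \frac{\sqrt{2(n-1)(n-2)}}{2(n-1) + (n-2)\sum_{\Lambda=1}^{n-1} r_\Lambda}$ and $q_\Lambda = P\sqrt{\frac{n-2}{2(n-1)}}\bigl(r_\Lambda + \frac{2}{n-2}\bigr)$. Then the standard Kasner relations hold: $\sum_{\Lambda=1}^{n-1} q_\Lambda = 1$ and $\sum_{\Lambda=1}^{n-1} q_\Lambda^2 = 1 - 2P^2$. -/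
/-- From the generalized Kasner relation for the exponents `r_Λ` with nonnegative trace,
the quantities `P` and `q_Λ` defined from them satisfy the standard Kasner relations
`∑ q_Λ = 1` and `∑ q_Λ² = 1 - 2P²`. -/
theorem stmt_3 (n : ℕ) (hn : 3 ≤ n) (r : Fin (n - 1) → ℝ)
    (hsum : 0 ≤ ∑ Λ, r Λ)
    (hK : (∑ Λ, r Λ) ^ 2 - (∑ Λ, (r Λ) ^ 2) + 4 * ∑ Λ, r Λ = 0)
    (P : ℝ)
    (hP : P = Real.sqrt (2 * ((n : ℝ) - 1) * ((n : ℝ) - 2)) /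
      (2 * ((n : ℝ) - 1) + ((n : ℝ) - 2) * ∑ Λ, r Λ))
    (q : Fin (n - 1) → ℝ)
    (hq : ∀ Λ, q Λ = P * Real.sqrt (((n : ℝ) - 2) / (2 * ((n : ℝ) - 1))) *
      (r Λ + 2 / ((n : ℝ) - 2))) :
    (∑ Λ, q Λ = 1) ∧ (∑ Λ, (q Λ) ^ 2 = 1 - 2 * P ^ 2) := by
  have hn3 : (3:ℝ) ≤ (n:ℝ) := by exact_mod_cast hn
  set a : ℝ := (n:ℝ) - 2 with ha'
  set b : ℝ := (n:ℝ) - 1 with hb'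
  have ha : (0:ℝ) < a := by simp [ha']; linarith
  have hb : (0:ℝ) < b := by simp [hb']; linarith
  have hba : b = a + 1 := by simp [ha', hb']; ring
  set S : ℝ := ∑ Λ, r Λ with hS
  set Q : ℝ := ∑ Λ, (r Λ)^2 with hQdef
  have hQ : Q = S^2 + 4*S := by linarith
  have hD : (0:ℝ) < 2*b + a*S := by nlinarith [mul_nonneg ha.le hsum]
  have hcard : ((Fintype.card (Fin (n-1)) : ℝ)) = b := by
    have h1 : (1:ℕ) ≤ n := by omega
    simp [Nat.cast_sub h1, hb']
  have hsqrt : Real.sqrt (2*b*a) * Real.sqrt (a/(2*b)) = a := by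
    rw [← Real.sqrt_mul (by positivity)]
    rw [show 2*b*a*(a/(2*b)) = a^2 by field_simp]
    exact Real.sqrt_sq ha.le
  have hP2 : P^2 = 2*b*a/(2*b+a*S)^2 := by
    rw [hP, div_pow, Real.sq_sqrt (by positivity)]
  have hsum1 : ∑ Λ, (r Λ + 2/a) = S + b * (2/a) := by
    rw [Finset.sum_add_distrib, Finset.sum_const, Finset.card_univ, nsmul_eq_mul, hcard]
  have hsum2 : ∑ Λ, (r Λ + 2/a)^2 = Q + (4/a)*S + b*(4/a^2) := by
    have h : ∀ Λ, (r Λ + 2/a)^2 = (r Λ)^2 + (4/a)*(r Λ) + 4/a^2 := by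
      intro Λ; field_simp; ring
    simp_rw [h]
    rw [Finset.sum_add_distrib, Finset.sum_add_distrib, ← Finset.mul_sum,
      Finset.sum_const, Finset.card_univ, nsmul_eq_mul, hcard]
  have hqa : ∀ Λ, q Λ = P * Real.sqrt (a/(2*b)) * (r Λ + 2/a) := by
    intro Λ; rw [hq]
  constructor
  · have : ∑ Λ, q Λ = P * Real.sqrt (a/(2*b)) * (S + b*(2/a)) := by
      simp_rw [hqa]; rw [← Finset.mul_sum, hsum1]
    rw [this, hP, div_mul_eq_mul_div, hsqrt]
    field_simp
    ring
  · have heq : ∑ Λ, (q Λ)^2 = P^2 * (a/(2*b)) * (Q + (4/a)*S + b*(4/a^2)) := by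
      simp_rw [hqa, mul_pow]
      rw [← Finset.mul_sum, hsum2, Real.sq_sqrt (by positivity)]
    rw [heq, hP2, hQ, hba]
    field_simp
    ring
end

section
/- Fix constants $\epsilon_0, \epsilon_1, \epsilon_2, \sigma$ with $\sigma > 0$ small, and define on the closure $\bar{E}$ of the domain $E = \{(\epsilon_0,\epsilon_1,\epsilon_2) \in \mathbb{R}^3 : 0 < \epsilon_0,\ \frac{1}{1+\sqrt{3}} < \epsilon_1,\ 3\epsilon_0 + \epsilon_1 < 1,\ 0 < \epsilon_2 < 1 - \epsilon_0\}$ the function $\xi_1 = \min\{1 - 3\epsilon_0 - \epsilon_1,\ \epsilon_0,\ 2(\epsilon_1 - \frac{1}{1+\sqrt{3}} - \sigma),\ 1 - \epsilon_0 - \epsilon_2,\ \epsilon_2\}$. Then the maximum value of $\xi_1$ over $\bar{E}$ equals $\frac{2}{9}\bigl(1 - \frac{1}{1+\sqrt{3}} - \sigma\bigr)$, attained at $\epsilon_0 = \epsilon_2 = \frac{2}{9}(1 - \frac{1}{1+\sqrt{3}} - \sigma)$ and $\epsilon_1 = \frac{8}{9}(\frac{1}{8} + \frac{1}{1+\sqrt{3}}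 + \sigma)$. -/
/-- The parameter domain `E` from the stability proof. -/
def Edom : Set (ℝ × ℝ × ℝ) :=
  {e | 0 < e.1 ∧ 1 / (1 + Real.sqrt 3) < e.2.1 ∧ 3 * e.1 + e.2.1 < 1 ∧
    0 < e.2.2 ∧ e.2.2 < 1 - e.1}

/-- The decay exponent `ξ₁` as a function of `(ε₀, ε₁, ε₂)`. -/
noncomputable def xi1 (σ : ℝ) (e : ℝ × ℝ × ℝ) : ℝ :=
  min (1 - 3 * e.1 - e.2.1) (min e.1 (min (2 * (e.2.1 - 1 / (1 + Real.sqrt 3) - σ))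
    (min (1 - e.1 - e.2.2) e.2.2)))

/-- The maximum of `ξ₁` over the closure of `E` equals `(2/9)(1 - 1/(1+√3) - σ)`, attained
at `ε₀ = ε₂ = (2/9)(1 - 1/(1+√3) - σ)`, `ε₁ = (8/9)(1/8 + 1/(1+√3) + σ)`. -/
theorem stmt_9 (σ : ℝ) (hσ : 0 < σ) (hσ' : σ < 1 - 1 / (1 + Real.sqrt 3)) :
    ((2 / 9 * (1 - 1 / (1 + Real.sqrt 3) - σ),
        8 / 9 * (1 / 8 + 1 / (1 + Real.sqrt 3) + σ),
        2 / 9 * (1 - 1 / (1 + Real.sqrt 3) - σ)) : ℝ × ℝ × ℝ) ∈ closure Edom ∧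
    xi1 σ (2 / 9 * (1 - 1 / (1 + Real.sqrt 3) - σ),
        8 / 9 * (1 / 8 + 1 / (1 + Real.sqrt 3) + σ),
        2 / 9 * (1 - 1 / (1 + Real.sqrt 3) - σ)) =
      2 / 9 * (1 - 1 / (1 + Real.sqrt 3) - σ) ∧
    ∀ e ∈ closure Edom, xi1 σ e ≤ 2 / 9 * (1 - 1 / (1 + Real.sqrt 3) - σ) := by
  set c : ℝ := 1 / (1 + Real.sqrt 3) with hc
  have hs : (0:ℝ) < Real.sqrt 3 := Real.sqrt_pos.mpr (by norm_num)
  have hc0 : 0 < c := by positivity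
  have hc1 : c < 1 := by
    rw [hc, div_lt_one (by linarith)]; linarith
  have hK : 0 < 1 - c - σ := by linarith
  have hub : ∀ e : ℝ × ℝ × ℝ, xi1 σ e ≤ 2 / 9 * (1 - c - σ) := by
    intro e
    have h1 : xi1 σ e ≤ 1 - 3 * e.1 - e.2.1 := min_le_left _ _
    have h2 : xi1 σ e ≤ e.1 := (min_le_right _ _).trans (min_le_left _ _)
    have h3 : xi1 σ e ≤ 2 * (e.2.1 - c - σ) :=
      (min_le_right _ _).trans ((min_le_right _ _).trans (min_le_left _ _))
    linarith
  refine ⟨?_, ?_, fun e _ => hub e⟩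
  · apply subset_closure
    refine ⟨by positivity, by nlinarith, by nlinarith, by positivity, by nlinarith⟩
  · refine le_antisymm (hub _) ?_
    refine le_min (by nlinarith) (le_min (by nlinarith) (le_min (by nlinarith)
      (le_min (by nlinarith) (by nlinarith))))
end
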